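/- As p → 1⁺, the constant K_p = Γ(1/2)Γ(c_p)/(Γ(a_p+3/2)Γ(b_p+3/2)) satisfies K_p = (p-1)·(1+o(1)), where a_p, b_p, c_p are the hypergeometric parameters a_p = (3-p+√(4+12(p-1)-3(p-1)²))/(4(p-1)), b_p = (3-p-√(4+12(p-1)-3(p-1)²))/(4(p-1)), c_p = p/(p-1). -/

import Mathlib

/-!
Write `x = a_p + 1/2` and `s = b_p + 1`, so that `c_p = x + s`, `Γ(a_p + 3/2) = x Γ(x)` and
`K_p / (p - 1) = Γ(1/2) / Γ(s + 1/2) · Γ(x + s) / (Γ(x) x^s) · x^s / (x (p - 1))`.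
As `p → 1⁺` we have `x (p - 1) → 1`, `s → 0` and `s x` stays bounded, so
`x^s = exp (s x · log x / x) → 1` and the outer factors tend to `1`. The middle factor tends
to `1` by Wendel's inequalities `x / (x + 1) ≤ Γ(x + s) / (Γ(x) x^s) ≤ 1` for `0 < s < 1`,
consequences of the log-convexity of `Γ`.
-/

open Real Filter

noncomputable def ap (p : ℝ) : ℝ :=
  (3 - p + Real.sqrt (4 + 12 * (p - 1) - 3 * (p - 1) ^ 2)) / (4 * (p - 1))

noncomputable def bp (p : ℝ) : ℝ :=
  (3 - p - Real.sqrt (4 + 12 * (p - 1) - 3 * (p - 1) ^ 2)) / (4 * (p - 1))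

noncomputable def cp (p : ℝ) : ℝ := p / (p - 1)

/-- The constant `K_p = Γ(1/2)Γ(c_p)/(Γ(a_p+3/2)Γ(b_p+3/2))`. -/
noncomputable def Kp (p : ℝ) : ℝ :=
  Real.Gamma (1 / 2) * Real.Gamma (cp p) /
    (Real.Gamma (ap p + 3 / 2) * Real.Gamma (bp p + 3 / 2))

open Set Topology

namespace Real

theorem Gamma_add_le_Gamma_mul_rpow {x s : ℝ} (hx : 0 < x) (hs₀ : 0 < s) (hs₁ : s < 1) :
    Gamma (x + s) ≤ Gamma x * x ^ s := by
  have hΓ := (Gamma_pos_of_pos hx).le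
  have h := Gamma_mul_add_mul_le_rpow_Gamma_mul_rpow_Gamma hx (by linarith : 0 < x + 1)
    (sub_pos.2 hs₁) hs₀ (sub_add_cancel 1 s)
  calc Gamma (x + s) = Gamma ((1 - s) * x + s * (x + 1)) := by ring_nf
    _ ≤ Gamma x ^ (1 - s) * Gamma (x + 1) ^ s := h
    _ = Gamma x * x ^ s := by
      rw [Gamma_add_one hx.ne', mul_comm x, mul_rpow hΓ hx.le, ← mul_assoc, ← rpow_add' hΓ
        (by norm_num), sub_add_cancel, rpow_one]

theorem mul_Gamma_mul_rpow_le_add_one_mul_Gamma_add {x s : ℝ} (hx : 0 < x) (hs₀ : 0 < s)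
    (hs₁ : s < 1) : x * (Gamma x * x ^ s) ≤ (x + 1) * Gamma (x + s) := by
  have hxs : 0 < x + s := by linarith
  -- the upper bound at `x + s` with step `1 - s`
  have h := Gamma_add_le_Gamma_mul_rpow hxs (sub_pos.2 hs₁) (by linarith)
  rw [add_add_sub_cancel, Gamma_add_one hx.ne'] at h
  have hgm : x ^ s * (x + s) ^ (1 - s) ≤ x + 1 := by
    have := geom_mean_le_arith_mean2_weighted hs₀.le (sub_pos.2 hs₁).le hx.le hxs.le
      (add_sub_cancel s 1)
    nlinarith
  have hΓ := Gamma_pos_of_pos hxs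
  calc x * (Gamma x * x ^ s) = x * Gamma x * x ^ s := by ring
    _ ≤ Gamma (x + s) * (x + s) ^ (1 - s) * x ^ s := by gcongr
    _ ≤ (x + 1) * Gamma (x + s) := by nlinarith

theorem tendsto_Gamma_add_div_Gamma_mul_rpow {α : Type*} {l : Filter α} {x s : α → ℝ}
    (hx : Tendsto x l atTop) (hs : ∀ᶠ t in l, s t ∈ Ioo 0 1) :
    Tendsto (fun t => Gamma (x t + s t) / (Gamma (x t) * x t ^ s t)) l (𝓝 1) := by
  have hlow : Tendsto (fun t => x t / (x t + 1)) l (𝓝 1) := by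
    have := (tendsto_inv_atTop_zero.comp (tendsto_atTop_add_const_right _ 1 hx)).const_sub 1
    rw [sub_zero] at this
    refine this.congr' ?_
    filter_upwards [hx.eventually_gt_atTop 0] with t ht
    simp only [Function.comp_apply]
    field_simp
    ring
  refine tendsto_of_tendsto_of_tendsto_of_le_of_le' hlow tendsto_const_nhds ?_ ?_
  all_goals
    filter_upwards [hs, hx.eventually_gt_atTop 0] with t ⟨hs₀, hs₁⟩ hxt
    have hden : 0 < Gamma (x t) * x t ^ s t := by
      have := Gamma_pos_of_pos hxt
      positivity
  · rw [div_le_div_iff₀ (by linarith) hden]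
    linarith [mul_Gamma_mul_rpow_le_add_one_mul_Gamma_add hxt hs₀ hs₁]
  · rw [div_le_one hden]
    exact Gamma_add_le_Gamma_mul_rpow hxt hs₀ hs₁

theorem tendsto_rpow_of_abs_mul_le {α : Type*} {l : Filter α} {x s : α → ℝ} {C : ℝ}
    (hx : Tendsto x l atTop) (hsx : ∀ᶠ t in l, |s t * x t| ≤ C) :
    Tendsto (fun t => x t ^ s t) l (𝓝 1) := by
  have hlog : Tendsto (fun t => log (x t) / x t) l (𝓝 0) :=
    isLittleO_log_id_atTop.tendsto_div_nhds_zero.comp hx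
  have hbdd : IsBoundedUnder (· ≤ ·) l fun t => ‖s t * x t‖ :=
    isBoundedUnder_of_eventually_le hsx
  have hexp := (hlog.zero_mul_isBoundedUnder_le hbdd).rexp
  rw [exp_zero] at hexp
  refine hexp.congr' ?_
  filter_upwards [hx.eventually_gt_atTop 0] with t ht
  rw [rpow_def_of_pos ht]
  field_simp

end Real

section Parameters

variable {p : ℝ}

theorem sqrt_discr_mem_Ioo (hp : p ∈ Ioo 1 2) :
    √(4 + 12 * (p - 1) - 3 * (p - 1) ^ 2) ∈
      Ioo (2 + 3 * (p - 1) - 3 * (p - 1) ^ 2) (2 + 3 * (p - 1)) := by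
  obtain ⟨hp₁, hp₂⟩ := hp
  constructor
  · rw [Real.lt_sqrt (by nlinarith)]
    nlinarith [mul_pos (pow_pos (sub_pos.2 hp₁) 3) (by linarith : (0 : ℝ) < 3 - p)]
  · rw [Real.sqrt_lt' (by linarith)]
    nlinarith

theorem bp_add_one_mem_Ioc (hp : p ∈ Ioo 1 2) : bp p + 1 ∈ Ioc 0 (3 * (p - 1) / 4) := by
  obtain ⟨hr₁, hr₂⟩ := sqrt_discr_mem_Ioo hp
  have he : 0 < p - 1 := sub_pos.2 hp.1
  have hs : bp p + 1 = (2 + 3 * (p - 1) - √(4 + 12 * (p - 1) - 3 * (p - 1) ^ 2)) /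
      (4 * (p - 1)) := by
    rw [bp]
    field_simp
    ring
  rw [hs]
  constructor
  · exact div_pos (by linarith) (by linarith)
  · rw [div_le_div_iff₀ (by linarith) (by norm_num)]
    nlinarith

theorem ap_add_half_mul_sub_one_mem_Ioo (hp : p ∈ Ioo 1 2) :
    (ap p + 1 / 2) * (p - 1) ∈ Ioo 1 p := by
  obtain ⟨hr₁, hr₂⟩ := sqrt_discr_mem_Ioo hp
  have hx : (ap p + 1 / 2) * (p - 1) =
      (2 + (p - 1) + √(4 + 12 * (p - 1) - 3 * (p - 1) ^ 2)) / 4 := by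
    rw [ap]
    field_simp [(sub_pos.2 hp.1).ne']
    ring
  rw [hx]
  constructor <;> nlinarith [hp.1, hp.2]

theorem one_lt_ap_add_half (hp : p ∈ Ioo 1 2) : 1 < ap p + 1 / 2 := by
  have h := (ap_add_half_mul_sub_one_mem_Ioo hp).1
  by_contra! hx
  nlinarith [mul_le_mul_of_nonneg_right hx (sub_pos.2 hp.1).le, hp.2]

theorem abs_bp_add_one_mul_ap_add_half_le (hp : p ∈ Ioo 1 2) :
    |(bp p + 1) * (ap p + 1 / 2)| ≤ 3 / 2 := by
  obtain ⟨hs₀, hs₁⟩ := bp_add_one_mem_Ioc hp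
  obtain ⟨-, hx⟩ := ap_add_half_mul_sub_one_mem_Ioo hp
  have hx₀ := one_lt_ap_add_half hp
  rw [abs_of_pos (by positivity)]
  nlinarith [hp.1, hp.2]

theorem cp_eq_ap_add_half_add_bp_add_one (hp : p ≠ 1) :
    cp p = (ap p + 1 / 2) + (bp p + 1) := by
  have : p - 1 ≠ 0 := sub_ne_zero.2 hp
  rw [cp, ap, bp]
  field_simp
  ring

theorem Kp_div_sub_one_eq (hp : p ∈ Ioo 1 2) :
    Kp p / (p - 1) = Real.Gamma (1 / 2) / Real.Gamma (bp p + 3 / 2) *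
      (Real.Gamma ((ap p + 1 / 2) + (bp p + 1)) /
        (Real.Gamma (ap p + 1 / 2) * (ap p + 1 / 2) ^ (bp p + 1))) *
      ((ap p + 1 / 2) ^ (bp p + 1) / ((ap p + 1 / 2) * (p - 1))) := by
  have hx : 0 < ap p + 1 / 2 := by linarith [one_lt_ap_add_half hp]
  have hΓx := Real.Gamma_pos_of_pos hx
  have hΓs := Real.Gamma_pos_of_pos (by linarith [(bp_add_one_mem_Ioc hp).1] : 0 < bp p + 3 / 2)
  have hxs := Real.rpow_pos_of_pos hx (bp p + 1)
  have he : p - 1 ≠ 0 := (sub_pos.2 hp.1).ne'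
  have hΓa : Real.Gamma (ap p + 3 / 2) = (ap p + 1 / 2) * Real.Gamma (ap p + 1 / 2) := by
    rw [← Real.Gamma_add_one hx.ne']
    ring_nf
  rw [Kp, cp_eq_ap_add_half_add_bp_add_one hp.1.ne', hΓa]
  generalize ap p + 1 / 2 = x at *
  generalize x ^ (bp p + 1) = y at *
  field_simp

end Parameters

section Limits

theorem eventually_mem_Ioo_one_two : ∀ᶠ p in 𝓝[>] (1 : ℝ), p ∈ Ioo 1 2 :=
  Ioo_mem_nhdsGT one_lt_two

theorem tendsto_bp_nhdsGT_one : Tendsto bp (𝓝[>] 1) (𝓝 (-1)) := by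
  have hup : Tendsto (fun p : ℝ => -1 + 3 * (p - 1) / 4) (𝓝[>] 1) (𝓝 (-1)) :=
    ((by fun_prop : Continuous fun p : ℝ => -1 + 3 * (p - 1) / 4).tendsto' 1 (-1)
      (by norm_num)).mono_left nhdsWithin_le_nhds
  refine tendsto_of_tendsto_of_tendsto_of_le_of_le' tendsto_const_nhds hup ?_ ?_
  all_goals
    filter_upwards [eventually_mem_Ioo_one_two] with p hp
    have := bp_add_one_mem_Ioc hp
  · linarith [this.1]
  · linarith [this.2]

theorem tendsto_ap_add_half_mul_sub_one :
    Tendsto (fun p => (ap p + 1 / 2) * (p - 1)) (𝓝[>] 1) (𝓝 1) := by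
  refine tendsto_of_tendsto_of_tendsto_of_le_of_le' tendsto_const_nhds
    (tendsto_id.mono_left nhdsWithin_le_nhds) ?_ ?_
  all_goals
    filter_upwards [eventually_mem_Ioo_one_two] with p hp
    have := ap_add_half_mul_sub_one_mem_Ioo hp
  · exact this.1.le
  · exact this.2.le

theorem tendsto_ap_add_half_atTop : Tendsto (fun p => ap p + 1 / 2) (𝓝[>] 1) atTop := by
  have he : Tendsto (fun p : ℝ => p - 1) (𝓝[>] 1) (𝓝[>] 0) := by
    refine tendsto_nhdsWithin_iff.2 ⟨?_, ?_⟩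
    · exact ((by fun_prop : Continuous fun p : ℝ => p - 1).tendsto' 1 0
        (by norm_num)).mono_left nhdsWithin_le_nhds
    · filter_upwards [self_mem_nhdsWithin] with p hp using sub_pos.2 (mem_Ioi.1 hp)
  refine tendsto_atTop_mono' _ ?_ (tendsto_inv_nhdsGT_zero.comp he)
  filter_upwards [eventually_mem_Ioo_one_two] with p hp
  rw [Function.comp_apply, inv_le_iff_one_le_mul₀ (sub_pos.2 hp.1)]
  exact (ap_add_half_mul_sub_one_mem_Ioo hp).1.le

theorem tendsto_Gamma_half_div_Gamma_bp_add_three_halves :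
    Tendsto (fun p => Real.Gamma (1 / 2) / Real.Gamma (bp p + 3 / 2)) (𝓝[>] 1) (𝓝 1) := by
  have hΓ : Real.Gamma (1 / 2) ≠ 0 := (Real.Gamma_pos_of_pos one_half_pos).ne'
  have hcont : ContinuousAt Real.Gamma (1 / 2) :=
    (Real.differentiableAt_Gamma fun m h => by
      linarith [(m.cast_nonneg : (0 : ℝ) ≤ m)]).continuousAt
  have hb : Tendsto (fun p => bp p + 3 / 2) (𝓝[>] 1) (𝓝 (1 / 2)) := by
    convert tendsto_bp_nhdsGT_one.add_const (3 / 2 : ℝ) using 2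
    norm_num
  have h := (tendsto_const_nhds (x := Real.Gamma (1 / 2))).div (hcont.tendsto.comp hb) hΓ
  rwa [div_self hΓ] at h

end Limits

/-- `K_p = (p-1)(1 + o(1))` as `p → 1⁺`. -/
theorem stmt_14 :
    Tendsto (fun p : ℝ => Kp p / (p - 1)) (nhdsWithin 1 (Set.Ioi 1)) (nhds 1) := by
  have hx := tendsto_ap_add_half_atTop
  have hs : ∀ᶠ p in 𝓝[>] 1, bp p + 1 ∈ Ioo 0 1 := by
    filter_upwards [eventually_mem_Ioo_one_two] with p hp
    obtain ⟨hs₀, hs₁⟩ := bp_add_one_mem_Ioc hp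
    exact ⟨hs₀, by linarith [hp.2]⟩
  have hsx : ∀ᶠ p in 𝓝[>] 1, |(bp p + 1) * (ap p + 1 / 2)| ≤ 3 / 2 := by
    filter_upwards [eventually_mem_Ioo_one_two] with p hp
      using abs_bp_add_one_mul_ap_add_half_le hp
  have hlim := (tendsto_Gamma_half_div_Gamma_bp_add_three_halves.mul
    (tendsto_Gamma_add_div_Gamma_mul_rpow hx hs)).mul
    ((tendsto_rpow_of_abs_mul_le hx hsx).div tendsto_ap_add_half_mul_sub_one one_ne_zero)
  rw [mul_one, one_mul, div_one] at hlim
  refine hlim.congr' ?_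
  filter_upwards [eventually_mem_Ioo_one_two] with p hp using (Kp_div_sub_one_eq hp).symm
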